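/- Weight-perturbation stability of multi-headed attention: Let d, l, m ≥ 1 be integers and M, kappa ≥ 1, eta > 0. Let MHA_1(H) = sum_{j=1}^m A_j^1(H) and MHA_2(H) = sum_{j=1}^m A_j^2(H) be multi-headed attention layers whose corresponding attention heads A_j^1 and A_j^2 have parameter matrices in R^{d×d} with all entries bounded in absolute value by kappa and differing entrywise by at most eta (i.e. the query, key and value matrices of A_j^1 and A_j^2 differ by at most eta in each entry, for each j). Then for every H in R^{d×l} with ||H||_∞ ≤ M, ||MHA_1(H) − MHA_2(H)||_∞ ≤ 3·kappa^3·d^6·M^3·m·l·eta. -/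

import Mathlib

/-
Every quantity in a head is a sum of products of entries, so the difference of two heads is
controlled by the product rule `x₁y₁ - x₂y₂ = (x₁ - x₂)y₁ + x₂(y₁ - y₂)` together with the
fact that ReLU is 1-Lipschitz. With `B = dκM` bounding the entries of `Qhᵢ, Khⱼ, Vhⱼ` and
`δ = dηM` bounding their perturbations, the scores `⟨Qhᵢ, Khⱼ⟩` are bounded by `dB²` and move
by at most `2dBδ`, so each summand `σ(⟨Qhᵢ, Khⱼ⟩) Vhⱼ` moves by at most `3dB²δ = 3d⁴κ²M³η`.
Summing over the `l` columns and the `m` heads gives `3κ²d⁴M³mlη`, which is at most the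
claimed bound because `κ, d ≥ 1`.
-/

open Matrix Finset Real MeasureTheory

noncomputable section

/-- The ReLU activation function. -/
def relu (t : ℝ) : ℝ := max 0 t

/-- A ReLU attention head with query, key and value matrices `Q K V`, acting on an
embedding matrix `H ∈ ℝ^{de × l}`:  the `i`-th column of `A(H)` is
`∑ j σ(⟨Q h_i, K h_j⟩) V h_j`. -/
def attnHead {de l : ℕ} (Q K V : Matrix (Fin de) (Fin de) ℝ)
    (H : Matrix (Fin de) (Fin l) ℝ) : Matrix (Fin de) (Fin l) ℝ :=
  Matrix.of fun a i => ∑ j : Fin l,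
    relu (∑ b : Fin de, Q.mulVec (fun c => H c i) b * K.mulVec (fun c => H c j) b) *
      V.mulVec (fun c => H c j) a

/-- Multi-headed attention layer with `m` heads. -/
def mha {de l : ℕ} (m : ℕ) (Q K V : ℕ → Matrix (Fin de) (Fin de) ℝ)
    (H : Matrix (Fin de) (Fin l) ℝ) : Matrix (Fin de) (Fin l) ℝ :=
  ∑ j ∈ Finset.range m, attnHead (Q j) (K j) (V j) H

lemma abs_sum_le_card_mul {ι : Type*} [Fintype ι] {f : ι → ℝ} {C : ℝ} (h : ∀ i, |f i| ≤ C) :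
    |∑ i, f i| ≤ Fintype.card ι * C :=
  calc |∑ i, f i| ≤ ∑ i, |f i| := abs_sum_le_sum_abs _ _
    _ ≤ Fintype.card ι • C := sum_le_card_nsmul _ _ _ fun i _ => h i
    _ = Fintype.card ι * C := nsmul_eq_mul _ _

lemma abs_mul_sub_mul_le {x₁ x₂ y₁ y₂ Bx By δx δy : ℝ} (hx₂ : |x₂| ≤ Bx) (hy₁ : |y₁| ≤ By)
    (hδx : |x₁ - x₂| ≤ δx) (hδy : |y₁ - y₂| ≤ δy) :
    |x₁ * y₁ - x₂ * y₂| ≤ δx * By + Bx * δy :=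
  calc |x₁ * y₁ - x₂ * y₂| = |(x₁ - x₂) * y₁ + x₂ * (y₁ - y₂)| := by ring_nf
    _ ≤ |x₁ - x₂| * |y₁| + |x₂| * |y₁ - y₂| := by
      rw [← abs_mul, ← abs_mul]; exact abs_add_le _ _
    _ ≤ δx * By + Bx * δy := by
      gcongr
      · exact (abs_nonneg _).trans hδx
      · exact (abs_nonneg _).trans hx₂

lemma abs_relu_sub_relu_le (x y : ℝ) : |relu x - relu y| ≤ |x - y| := by
  rw [relu, relu, max_comm 0 x, max_comm 0 y]
  exact abs_max_sub_max_le_abs x y 0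

lemma abs_relu_le (x : ℝ) : |relu x| ≤ |x| := by
  simpa [relu] using abs_relu_sub_relu_le x 0

section Matrix

variable {m n : Type*} [Fintype n]

lemma abs_mulVec_le {A : Matrix m n ℝ} {v : n → ℝ} {κ M : ℝ} (hA : ∀ a b, |A a b| ≤ κ)
    (hv : ∀ b, |v b| ≤ M) (a : m) : |(A *ᵥ v) a| ≤ Fintype.card n * (κ * M) :=
  abs_sum_le_card_mul fun b => by
    rw [abs_mul]; exact mul_le_mul (hA a b) (hv b) (abs_nonneg _) ((abs_nonneg _).trans (hA a b))

lemma abs_mulVec_sub_mulVec_le {A B : Matrix m n ℝ} {v : n → ℝ} {η M : ℝ}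
    (hAB : ∀ a b, |A a b - B a b| ≤ η) (hv : ∀ b, |v b| ≤ M) (a : m) :
    |(A *ᵥ v) a - (B *ᵥ v) a| ≤ Fintype.card n * (η * M) := by
  simpa only [sub_mulVec, Pi.sub_apply] using abs_mulVec_le (A := A - B) hAB hv a

lemma abs_dotProduct_le {q k : n → ℝ} {B : ℝ} (hq : ∀ b, |q b| ≤ B) (hk : ∀ b, |k b| ≤ B) :
    |q ⬝ᵥ k| ≤ Fintype.card n * (B * B) :=
  abs_sum_le_card_mul fun b => by
    rw [abs_mul]; exact mul_le_mul (hq b) (hk b) (abs_nonneg _) ((abs_nonneg _).trans (hq b))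

lemma abs_dotProduct_sub_dotProduct_le {q₁ q₂ k₁ k₂ : n → ℝ} {B δ : ℝ}
    (hq₂ : ∀ b, |q₂ b| ≤ B) (hk₁ : ∀ b, |k₁ b| ≤ B)
    (hδq : ∀ b, |q₁ b - q₂ b| ≤ δ) (hδk : ∀ b, |k₁ b - k₂ b| ≤ δ) :
    |q₁ ⬝ᵥ k₁ - q₂ ⬝ᵥ k₂| ≤ Fintype.card n * (δ * B + B * δ) := by
  rw [dotProduct, dotProduct, ← sum_sub_distrib]
  exact abs_sum_le_card_mul fun b => abs_mul_sub_mul_le (hq₂ b) (hk₁ b) (hδq b) (hδk b)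

lemma abs_relu_dotProduct_smul_sub_le {q₁ q₂ k₁ k₂ v₁ v₂ : n → ℝ} {B δ : ℝ}
    (hq₂ : ∀ b, |q₂ b| ≤ B) (hk₁ : ∀ b, |k₁ b| ≤ B) (hk₂ : ∀ b, |k₂ b| ≤ B)
    (hv₁ : ∀ b, |v₁ b| ≤ B) (hδq : ∀ b, |q₁ b - q₂ b| ≤ δ) (hδk : ∀ b, |k₁ b - k₂ b| ≤ δ)
    (hδv : ∀ b, |v₁ b - v₂ b| ≤ δ) (a : n) :
    |relu (q₁ ⬝ᵥ k₁) * v₁ a - relu (q₂ ⬝ᵥ k₂) * v₂ a| ≤ 3 * Fintype.card n * B ^ 2 * δ := by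
  refine (abs_mul_sub_mul_le ((abs_relu_le _).trans (abs_dotProduct_le hq₂ hk₂)) (hv₁ a)
    ((abs_relu_sub_relu_le _ _).trans (abs_dotProduct_sub_dotProduct_le hq₂ hk₁ hδq hδk))
    (hδv a)).trans_eq ?_
  ring

end Matrix

lemma abs_attnHead_sub_attnHead_le {d l : ℕ} {Q₁ K₁ V₁ Q₂ K₂ V₂ : Matrix (Fin d) (Fin d) ℝ}
    {H : Matrix (Fin d) (Fin l) ℝ} {κ M η : ℝ}
    (hQ₂ : ∀ a b, |Q₂ a b| ≤ κ) (hK₁ : ∀ a b, |K₁ a b| ≤ κ) (hK₂ : ∀ a b, |K₂ a b| ≤ κ)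
    (hV₁ : ∀ a b, |V₁ a b| ≤ κ) (hdQ : ∀ a b, |Q₁ a b - Q₂ a b| ≤ η)
    (hdK : ∀ a b, |K₁ a b - K₂ a b| ≤ η) (hdV : ∀ a b, |V₁ a b - V₂ a b| ≤ η)
    (hH : ∀ a i, |H a i| ≤ M) (a : Fin d) (i : Fin l) :
    |attnHead Q₁ K₁ V₁ H a i - attnHead Q₂ K₂ V₂ H a i| ≤
      l * (3 * d * (d * (κ * M)) ^ 2 * (d * (η * M))) := by
  have hcol : ∀ j, ∀ c, |Hᵀ j c| ≤ M := fun j c => hH c j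
  simp only [attnHead, of_apply, ← sum_sub_distrib]
  refine (abs_sum_le_card_mul fun j => ?_).trans_eq (by rw [Fintype.card_fin])
  refine (abs_relu_dotProduct_smul_sub_le (abs_mulVec_le hQ₂ (hcol i))
    (abs_mulVec_le hK₁ (hcol j)) (abs_mulVec_le hK₂ (hcol j)) (abs_mulVec_le hV₁ (hcol j))
    (abs_mulVec_sub_mulVec_le hdQ (hcol i)) (abs_mulVec_sub_mulVec_le hdK (hcol j))
    (abs_mulVec_sub_mulVec_le hdV (hcol j)) a).trans_eq ?_
  rw [Fintype.card_fin]

lemma abs_mha_sub_mha_le {d l m : ℕ} {Q₁ K₁ V₁ Q₂ K₂ V₂ : ℕ → Matrix (Fin d) (Fin d) ℝ}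
    {H : Matrix (Fin d) (Fin l) ℝ} {C : ℝ} {a : Fin d} {i : Fin l}
    (h : ∀ j < m, |attnHead (Q₁ j) (K₁ j) (V₁ j) H a i - attnHead (Q₂ j) (K₂ j) (V₂ j) H a i| ≤ C) :
    |mha m Q₁ K₁ V₁ H a i - mha m Q₂ K₂ V₂ H a i| ≤ m * C := by
  simp only [mha, Matrix.sum_apply, ← sum_sub_distrib]
  refine (abs_sum_le_sum_abs _ _).trans ?_
  simpa using sum_le_card_nsmul (range m) _ _ fun j hj => h j (mem_range.mp hj)

theorem mha_weight_stability
    (d l m : ℕ) (hd : 1 ≤ d) (M κ η : ℝ)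
    (hM : 1 ≤ M) (hκ : 1 ≤ κ) (hη : 0 < η)
    (Q₁ K₁ V₁ Q₂ K₂ V₂ : ℕ → Matrix (Fin d) (Fin d) ℝ)
    (hK₁ : ∀ j < m, ∀ a b, |K₁ j a b| ≤ κ)
    (hV₁ : ∀ j < m, ∀ a b, |V₁ j a b| ≤ κ)
    (hQ₂ : ∀ j < m, ∀ a b, |Q₂ j a b| ≤ κ) (hK₂ : ∀ j < m, ∀ a b, |K₂ j a b| ≤ κ)
    (hdQ : ∀ j < m, ∀ a b, |Q₁ j a b - Q₂ j a b| ≤ η)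
    (hdK : ∀ j < m, ∀ a b, |K₁ j a b - K₂ j a b| ≤ η)
    (hdV : ∀ j < m, ∀ a b, |V₁ j a b - V₂ j a b| ≤ η)
    (H : Matrix (Fin d) (Fin l) ℝ) (hH : ∀ a i, |H a i| ≤ M) :
    ∀ a i, |mha m Q₁ K₁ V₁ H a i - mha m Q₂ K₂ V₂ H a i| ≤
      3 * κ ^ 3 * (d : ℝ) ^ 6 * M ^ 3 * m * l * η := by
  intro a i
  have hκd : κ ^ 2 * (d : ℝ) ^ 4 ≤ κ ^ 3 * (d : ℝ) ^ 6 :=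
    mul_le_mul (pow_le_pow_right₀ hκ (by norm_num))
      (pow_le_pow_right₀ (by exact_mod_cast hd) (by norm_num)) (by positivity) (by positivity)
  have hM₀ : 0 ≤ M := zero_le_one.trans hM
  calc _ ≤ m * (l * (3 * d * (d * (κ * M)) ^ 2 * (d * (η * M)))) :=
        abs_mha_sub_mha_le fun j hj => abs_attnHead_sub_attnHead_le (hQ₂ j hj) (hK₁ j hj)
          (hK₂ j hj) (hV₁ j hj) (hdQ j hj) (hdK j hj) (hdV j hj) hH a i
    _ = 3 * M ^ 3 * m * l * η * (κ ^ 2 * (d : ℝ) ^ 4) := by ring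
    _ ≤ 3 * M ^ 3 * m * l * η * (κ ^ 3 * (d : ℝ) ^ 6) :=
      mul_le_mul_of_nonneg_left hκd (by positivity)
    _ = 3 * κ ^ 3 * (d : ℝ) ^ 6 * M ^ 3 * m * l * η := by ring

end
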